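/- arXiv:1906.04339 — 3 statements merged into one kernel-verified Lean document; each statement's English description precedes it below -/
import Mathlib

section
/- For every even integer n ≥ 4, the Wiener index of G_n equals (n³ + 2n)/2. -/
/-- The Wiener index of a finite graph: the sum of the graph distances over all unordered
pairs of vertices, i.e. half the sum of `d(u,v)` over all ordered pairs `(u,v)`. -/
noncomputable def wienerIndex {V : Type*} [Fintype V] (G : SimpleGraph V) : ℕ :=
  (∑ u : V, ∑ v : V, G.dist u v) / 2

/-- The graph `G_n = P₂ ⊠ C_n`: vertex set `(ZMod n) × Fin 2`, where two distinct vertices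
`(i,a)` and `(j,b)` are adjacent iff `i = j` or `i = j + 1` or `j = i + 1` in `ZMod n`. -/
def Gn (n : ℕ) : SimpleGraph (ZMod n × Fin 2) where
  Adj x y := x ≠ y ∧ (x.1 = y.1 ∨ x.1 = y.1 + 1 ∨ y.1 = x.1 + 1)
  symm := by
    constructor
    rintro x y ⟨hne, h | h | h⟩
    · exact ⟨hne.symm, Or.inl h.symm⟩
    · exact ⟨hne.symm, Or.inr (Or.inr h)⟩
    · exact ⟨hne.symm, Or.inr (Or.inl h)⟩
  loopless := by constructor; rintro x ⟨hne, -⟩; exact hne rfl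

instance (n : ℕ) : DecidableRel (Gn n).Adj :=
  fun _ _ => inferInstanceAs (Decidable (_ ∧ _))

/-!
Write `|x| = x.valMinAbs.natAbs` for the cyclic distance of `x : ZMod n` from `0`. Projecting to
the first coordinate maps every edge of `G_n` to a step of cyclic length at most one, while one
can walk around the cycle choosing the second coordinate freely at each step. Hence
`d((i,a),(j,b)) = |j - i|`, except that the two vertices of a fibre are at distance `1`. Summing
over ordered pairs gives `4n ∑ₓ |x| + 2n`, and for `n = 2m` the cyclic distances add up to `m²`.
-/

open SimpleGraph

lemma sum_range_min_two_mul_sub (m : ℕ) :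
    ∑ t ∈ Finset.range (2 * m), min t (2 * m - t) = m * m := by
  rw [two_mul, Finset.sum_range_add, ← Finset.sum_add_distrib]
  calc ∑ t ∈ Finset.range m, (min t (m + m - t) + min (m + t) (m + m - (m + t)))
      = ∑ _t ∈ Finset.range m, m :=
        Finset.sum_congr rfl fun t ht => by have := Finset.mem_range.mp ht; omega
    _ = m * m := by simp

lemma ZMod.sum_natAbs_valMinAbs_of_eq_two_mul {n m : ℕ} [NeZero n] (h : n = 2 * m) :
    ∑ x : ZMod n, x.valMinAbs.natAbs = m * m := by
  obtain ⟨k, rfl⟩ := Nat.exists_eq_succ_of_ne_zero (NeZero.ne n)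
  simp only [ZMod.valMinAbs_natAbs_eq_min]
  rw [← sum_range_min_two_mul_sub, ← h]
  exact Fin.sum_univ_eq_sum_range (fun t => min t (k + 1 - t)) (k + 1)

lemma ZMod.natAbs_valMinAbs_one_le (n : ℕ) : (1 : ZMod n).valMinAbs.natAbs ≤ 1 := by
  rcases n with _ | _ | n
  · simp
  · simp [Subsingleton.elim (1 : ZMod 1) 0]
  · have := ZMod.valMinAbs_natCast_of_le_half (n := n + 2) (a := 1) (by omega)
    simp_all

namespace Gn

variable {n : ℕ}

lemma natAbs_valMinAbs_sub_le_one_of_adj {u v : ZMod n × Fin 2} (h : (Gn n).Adj u v) :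
    (v.1 - u.1).valMinAbs.natAbs ≤ 1 := by
  obtain ⟨-, h | h | h⟩ := h
  · simp [h]
  · rw [h, sub_add_cancel_left, ZMod.natAbs_valMinAbs_neg]
    exact ZMod.natAbs_valMinAbs_one_le n
  · rw [h, add_sub_cancel_left]
    exact ZMod.natAbs_valMinAbs_one_le n

lemma natAbs_valMinAbs_sub_le_length {u v : ZMod n × Fin 2} (w : (Gn n).Walk u v) :
    (v.1 - u.1).valMinAbs.natAbs ≤ w.length := by
  induction w with
  | nil => simp
  | @cons u v x h w ih =>
    calc (x.1 - u.1).valMinAbs.natAbs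
        ≤ ((x.1 - v.1).valMinAbs + (v.1 - u.1).valMinAbs).natAbs := by
          simpa using ZMod.natAbs_valMinAbs_add_le (x.1 - v.1) (v.1 - u.1)
      _ ≤ (x.1 - v.1).valMinAbs.natAbs + (v.1 - u.1).valMinAbs.natAbs := Int.natAbs_add_le _ _
      _ ≤ (w.cons h).length := by
          have := natAbs_valMinAbs_sub_le_one_of_adj h
          rw [Walk.length_cons]
          omega

lemma adj_add_one [Nontrivial (ZMod n)] (i : ZMod n) (a b : Fin 2) :
    (Gn n).Adj (i, a) (i + 1, b) :=
  ⟨fun h => by simpa using congrArg Prod.fst h, Or.inr (Or.inr rfl)⟩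

lemma exists_walk_length_eq [Nontrivial (ZMod n)] (k : ℕ) (i : ZMod n) (a b : Fin 2) :
    ∃ w : (Gn n).Walk (i, a) (i + (k + 1 : ℕ), b), w.length = k + 1 := by
  induction k generalizing i with
  | zero => exact ⟨(Walk.cons (adj_add_one i a b) .nil).copy rfl (by simp), by simp⟩
  | succ k ih =>
    obtain ⟨w, hw⟩ := ih (i + 1)
    refine ⟨(w.cons (adj_add_one i a a)).copy rfl (by push_cast; ring_nf), ?_⟩
    simp [hw]

lemma dist_eq_of_walk_length_eq {u v : ZMod n × Fin 2} (w : (Gn n).Walk u v)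
    (hw : w.length = (v.1 - u.1).valMinAbs.natAbs) :
    (Gn n).dist u v = (v.1 - u.1).valMinAbs.natAbs := by
  obtain ⟨p, hp⟩ := w.reachable.exists_walk_length_eq_dist
  have := natAbs_valMinAbs_sub_le_length p
  have := dist_le w
  omega

lemma dist_eq_of_fst_ne {i j : ZMod n} (a b : Fin 2) (h : i ≠ j) :
    (Gn n).dist (i, a) (j, b) = (j - i).valMinAbs.natAbs := by
  have := nontrivial_of_ne _ _ h
  obtain ⟨k, hk⟩ : ∃ k, (j - i).valMinAbs.natAbs = k + 1 :=
    Nat.exists_eq_succ_of_ne_zero (by simpa [sub_eq_zero] using h.symm)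
  rcases Int.natAbs_eq (j - i).valMinAbs with hpos | hneg
  · have hj : i + (k + 1 : ℕ) = j := by
      rw [← hk, ← Int.cast_natCast, ← hpos, ZMod.coe_valMinAbs, add_sub_cancel]
    obtain ⟨w, hw⟩ := exists_walk_length_eq k i a b
    exact dist_eq_of_walk_length_eq (w.copy rfl (by rw [hj])) (by simp [hw, hk])
  · have hi : j + (k + 1 : ℕ) = i := by
      rw [← hk, ← Int.cast_natCast, ← neg_neg (((j - i).valMinAbs.natAbs : ℤ)), ← hneg,
        Int.cast_neg, ZMod.coe_valMinAbs, neg_sub, add_sub_cancel]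
    obtain ⟨w, hw⟩ := exists_walk_length_eq k j b a
    exact dist_eq_of_walk_length_eq (w.reverse.copy (by rw [hi]) rfl) (by simp [hw, hk])

theorem dist_eq (u v : ZMod n × Fin 2) :
    (Gn n).dist u v =
      (v.1 - u.1).valMinAbs.natAbs + if u.1 = v.1 ∧ u.2 ≠ v.2 then 1 else 0 := by
  by_cases h : u.1 = v.1
  · by_cases h2 : u.2 = v.2
    · simp [Prod.ext h h2]
    · rw [if_pos ⟨h, h2⟩, h, sub_self, ZMod.valMinAbs_zero, Int.natAbs_zero, zero_add]
      exact dist_eq_one_iff_adj.mpr ⟨fun e => h2 (congrArg Prod.snd e), Or.inl h⟩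
  · simp [h, dist_eq_of_fst_ne u.2 v.2 h]

theorem sum_sum_dist [NeZero n] :
    ∑ u : ZMod n × Fin 2, ∑ v : ZMod n × Fin 2, (Gn n).dist u v =
      n * (4 * ∑ x : ZMod n, x.valMinAbs.natAbs + 2) := by
  have hshift (i : ZMod n) : ∑ j : ZMod n, (j - i).valMinAbs.natAbs =
      ∑ x : ZMod n, x.valMinAbs.natAbs :=
    Equiv.sum_comp (Equiv.subRight i) fun x => x.valMinAbs.natAbs
  have hsame (i : ZMod n) (a : Fin 2) :
      ∑ j : ZMod n, ∑ b : Fin 2, (if i = j ∧ a ≠ b then 1 else 0) = 1 := by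
    simp only [ite_and, Finset.sum_ite_irrel, Finset.sum_const_zero, Finset.sum_ite_eq,
      Finset.mem_univ, if_true]
    fin_cases a <;> rfl
  simp only [dist_eq, Finset.sum_add_distrib, Fintype.sum_prod_type]
  simp only [hsame, Finset.sum_const, Finset.card_univ, Fintype.card_fin, ZMod.card, smul_eq_mul,
    ← Finset.mul_sum, hshift]
  ring

end Gn

theorem wienerIndex_Gn_even_general (n : ℕ) [NeZero n] (heven : Even n) :
    wienerIndex (Gn n) = (n ^ 3 + 2 * n) / 2 := by
  obtain ⟨m, hm⟩ := heven
  rw [wienerIndex, Gn.sum_sum_dist, ZMod.sum_natAbs_valMinAbs_of_eq_two_mul (m := m) (by omega)]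
  congr 1
  subst hm
  ring

/-- For every even integer `n ≥ 4`, the Wiener index of `G_n = P₂ ⊠ C_n`
equals `(n³ + 2n)/2`. -/
theorem wienerIndex_Gn_even (n : ℕ) [NeZero n] (hn : 4 ≤ n) (heven : Even n) :
    wienerIndex (Gn n) = (n ^ 3 + 2 * n) / 2 :=
  wienerIndex_Gn_even_general n heven
end

section
/- For every integer n ≥ 3, G_n is 5-regular, its normalized Laplacian matrix equals (1/5)·L(G_n), and the characteristic polynomial of (1/5)·L(G_n) over ℝ factors as (X − 6/5)^n · ∏_{i=0}^{n−1} (X − (8/5)·sin²(iπ/n)). In particular the normalized Laplacian eigenvalues of G_n are 0, (8/5)·sin²(iπ/n) for i = 1, …, n−1, and 6/5 with multiplicity n. -/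
open Polynomial

/-- The normalized Laplacian matrix `D^{-1/2} L D^{-1/2}` of a graph, where `D` is the diagonal
matrix of vertex degrees and `L = D − A` is the Laplacian matrix (with the convention
`0^{-1/2} = 0` for isolated vertices, as provided by the real power function). -/
noncomputable def normalizedLapMatrix {V : Type*} [Fintype V] [DecidableEq V]
    (G : SimpleGraph V) [DecidableRel G.Adj] : Matrix V V ℝ :=
  Matrix.diagonal (fun v => (G.degree v : ℝ) ^ (-(1 / 2) : ℝ)) * G.lapMatrix ℝ *
    Matrix.diagonal (fun v => (G.degree v : ℝ) ^ (-(1 / 2) : ℝ))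

/-!
The adjacency matrix satisfies `A(G_n) + I = (I + A(C_n)) ⊗ J₂` with `J₂` the all-ones `2 × 2`
matrix, so `L(G_n) = 6 I - (I + A(C_n)) ⊗ J₂`. The circulant `I + A(C_n)` is diagonalized by the
Fourier matrix `(e^{2πijk/n})_{j,k}`, with eigenvalues `1 + 2 cos (2πk/n) = 3 - 4 sin² (πk/n)`,
and `J₂` by the Hadamard matrix, with eigenvalues `2` and `0`. Their Kronecker product is
therefore an eigenbasis of `L(G_n)`, with eigenvalues `8 sin² (πk/n)` and `6`. Since `G_n` is
5-regular, `D^{-1/2} = 5^{-1/2} I`.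
-/

open Matrix ZMod
open scoped Kronecker

section Eigenbasis

variable {R ι κ : Type*} [CommRing R] [Fintype ι] [DecidableEq ι] [Fintype κ] [DecidableEq κ]

theorem Matrix.charpoly_eq_prod_of_mul_eq_mul_diagonal {M P : Matrix ι ι R} {d : ι → R}
    (hP : IsUnit P) (h : M * P = P * diagonal d) : M.charpoly = ∏ i, (X - C (d i)) := by
  obtain ⟨U, rfl⟩ := hP
  have hM : M = U * (diagonal d * (↑U⁻¹ : Matrix ι ι R)) := by
    rw [← mul_assoc, ← h, mul_assoc, Units.mul_inv, mul_one]
  rw [hM, charpoly_mul_comm, mul_assoc, Units.inv_mul, mul_one, charpoly_diagonal]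

theorem Matrix.kronecker_mul_kronecker_eq_mul_diagonal {A P : Matrix ι ι R} {B Q : Matrix κ κ R}
    {a : ι → R} {b : κ → R} (hA : A * P = P * diagonal a) (hB : B * Q = Q * diagonal b) :
    (A ⊗ₖ B) * (P ⊗ₖ Q) = (P ⊗ₖ Q) * diagonal fun x => a x.1 * b x.2 := by
  rw [← mul_kronecker_mul, hA, hB, mul_kronecker_mul, diagonal_kronecker_diagonal]

theorem Matrix.smul_sub_mul_eq_mul_diagonal {A P : Matrix ι ι R} {a : ι → R} (r c : R)
    (hA : A * P = P * diagonal a) :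
    (r • (c • 1 - A)) * P = P * diagonal fun i => r * (c - a i) := by
  rw [smul_mul_assoc, sub_mul, smul_mul_assoc, one_mul, hA]
  ext i j
  simp only [smul_apply, sub_apply, mul_diagonal, smul_eq_mul]
  ring

theorem Matrix.allOnes_mul_hadamard :
    (of fun _ _ => 1 : Matrix (Fin 2) (Fin 2) R) * !![1, 1; 1, -1] =
      !![1, 1; 1, -1] * diagonal ![2, 0] := by
  ext i j
  fin_cases i <;> fin_cases j <;> simp [mul_apply, Fin.sum_univ_two] <;> norm_num

theorem Matrix.isUnit_hadamard {K : Type*} [Field K] [NeZero (2 : K)] :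
    IsUnit (!![1, 1; 1, -1] : Matrix (Fin 2) (Fin 2) K) := by
  rw [isUnit_iff_isUnit_det, det_fin_two_of, isUnit_iff_ne_zero]
  intro h
  exact NeZero.ne (2 : K) (by linear_combination -h)

end Eigenbasis

namespace ZMod

variable {n : ℕ} [NeZero n]

theorem prod_univ_eq_prod_range {M : Type*} [CommMonoid M] (f : ZMod n → M) :
    ∏ k, f k = ∏ i ∈ Finset.range n, f i :=
  Finset.prod_nbij' ZMod.val Nat.cast (fun k _ => Finset.mem_range.2 k.val_lt)
    (fun _ _ => Finset.mem_univ _) (fun k _ => ZMod.natCast_zmod_val k)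
    (fun _ hi => ZMod.val_cast_of_lt (Finset.mem_range.1 hi)) fun k _ => by
      rw [ZMod.natCast_zmod_val]

noncomputable def dftMatrix (n : ℕ) [NeZero n] : Matrix (ZMod n) (ZMod n) ℂ :=
  of fun j k => stdAddChar (j * k)

theorem dftMatrix_mul_conjTranspose : dftMatrix n * (dftMatrix n)ᴴ = (n : ℂ) • 1 := by
  ext i j
  have hshift (k : ZMod n) : i * k + -(j * k) = k * (i - j) := by ring
  simp only [mul_apply, dftMatrix, conjTranspose_apply, of_apply, Complex.star_def,
    ← AddChar.map_neg_eq_conj, ← AddChar.map_add_eq_mul, hshift,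
    AddChar.sum_mulShift _ (isPrimitive_stdAddChar n), sub_eq_zero, ZMod.card, Matrix.smul_apply,
    one_apply, smul_eq_mul, mul_ite, mul_one, mul_zero, Nat.cast_ite, Nat.cast_zero]

theorem isUnit_dftMatrix : IsUnit (dftMatrix n) := by
  rw [isUnit_iff_isUnit_det]
  refine isUnit_det_of_right_inverse (B := (n : ℂ)⁻¹ • (dftMatrix n)ᴴ) ?_
  rw [mul_smul_comm, dftMatrix_mul_conjTranspose, smul_smul, inv_mul_cancel₀ (NeZero.ne _),
    one_smul]

theorem circulant_mul_dftMatrix (v : ZMod n → ℂ) :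
    circulant v * dftMatrix n = dftMatrix n * diagonal (𝓕 v) := by
  ext i k
  rw [mul_apply, mul_diagonal, dft_apply, Finset.mul_sum]
  refine Fintype.sum_equiv (Equiv.subLeft i) _ _ fun j => ?_
  have hsplit : j * k = i * k + -((i - j) * k) := by ring
  simp only [circulant_apply, dftMatrix, of_apply, Equiv.subLeft_apply, smul_eq_mul, hsplit,
    AddChar.map_add_eq_mul]
  ring

end ZMod

section Laplacian

variable {V : Type*} [Fintype V] [DecidableEq V] (G : SimpleGraph V) [DecidableRel G.Adj]

theorem SimpleGraph.map_lapMatrix {R S : Type*} [Ring R] [Ring S] (f : R →+* S) :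
    (G.lapMatrix R).map f = G.lapMatrix S := by
  ext v w
  by_cases h : v = w <;> by_cases hadj : G.Adj v w <;>
    simp [SimpleGraph.lapMatrix, SimpleGraph.degMatrix, h, hadj]

theorem normalizedLapMatrix_of_isRegularOfDegree {d : ℕ} (hG : G.IsRegularOfDegree d) :
    normalizedLapMatrix G = (d : ℝ)⁻¹ • G.lapMatrix ℝ := by
  have hd : (d : ℝ) ^ (-(1 / 2) : ℝ) * (d : ℝ) ^ (-(1 / 2) : ℝ) = (d : ℝ)⁻¹ := by
    rw [← Real.rpow_add' (Nat.cast_nonneg d) (by norm_num)]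
    norm_num [Real.rpow_neg_one]
  ext v w
  rw [normalizedLapMatrix, mul_diagonal, diagonal_mul, hG v, hG w, Matrix.smul_apply,
    smul_eq_mul, ← hd]
  ring

end Laplacian

section StrongProduct

variable {n : ℕ}

def cycleOffsets (n : ℕ) : Finset (ZMod n) := {0, 1, -1}

theorem sum_cycleOffsets (hn : 3 ≤ n) {M : Type*} [AddCommMonoid M] (f : ZMod n → M) :
    ∑ j ∈ cycleOffsets n, f j = f 0 + f 1 + f (-1) := by
  have hcast (k : ℕ) (hk0 : 0 < k) (hk : k < n) : (k : ZMod n) ≠ 0 := by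
    rw [Ne, ZMod.natCast_eq_zero_iff]
    exact Nat.not_dvd_of_pos_of_lt hk0 hk
  have h1 : (1 : ZMod n) ≠ 0 := by exact_mod_cast hcast 1 one_pos (by omega)
  have h2 : (1 : ZMod n) ≠ -1 := fun h => hcast 2 two_pos (by omega) (by
    push_cast; linear_combination h)
  rw [cycleOffsets, Finset.sum_insert (by simp [h1.symm, h1]), Finset.sum_pair h2, add_assoc]

theorem Gn_adj_iff (x y : ZMod n × Fin 2) :
    (Gn n).Adj x y ↔ x ≠ y ∧ x.1 - y.1 ∈ cycleOffsets n := by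
  have hsub_one (a b : ZMod n) : a - b = 1 ↔ a = b + 1 := sub_eq_iff_eq_add'
  have hsub_neg_one (a b : ZMod n) : a - b = -1 ↔ b = a + 1 :=
    ⟨fun h => by linear_combination -h, fun h => by linear_combination -h⟩
  simp only [Gn, cycleOffsets, Finset.mem_insert, Finset.mem_singleton, sub_eq_zero, hsub_one,
    hsub_neg_one]

-- For `n ≥ 3`, `circulant (cycleOffsetsIndicator n)` is `I + A(C_n)`.
def cycleOffsetsIndicator {R : Type*} [Zero R] [One R] (n : ℕ) (j : ZMod n) : R :=
  if j ∈ cycleOffsets n then 1 else 0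

theorem adjMatrix_Gn (R : Type*) [Ring R] :
    (Gn n).adjMatrix R =
      circulant (cycleOffsetsIndicator n) ⊗ₖ (of fun _ _ => 1 : Matrix (Fin 2) (Fin 2) R) - 1 := by
  ext x y
  by_cases hxy : x = y
  · subst hxy
    simp [cycleOffsetsIndicator, cycleOffsets]
  · simp [Gn_adj_iff, hxy, cycleOffsetsIndicator]

variable [NeZero n]

theorem sum_cycleOffsetsIndicator_sub {R : Type*} [AddCommMonoidWithOne R] (hn : 3 ≤ n)
    (i : ZMod n) :
    ∑ j, (cycleOffsetsIndicator n (i - j) : R) = 3 := by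
  rw [Fintype.sum_equiv (Equiv.subLeft i) (fun j => (cycleOffsetsIndicator n (i - j) : R))
    (cycleOffsetsIndicator n) fun _ => rfl]
  simp only [cycleOffsetsIndicator, Finset.sum_ite_mem, Finset.univ_inter, sum_cycleOffsets hn]
  norm_num

theorem Gn_isRegularOfDegree (hn : 3 ≤ n) : (Gn n).IsRegularOfDegree 5 := by
  intro v
  have hdeg := (Gn n).adjMatrix_mulVec_const_apply (α := ℤ) (a := 1) (v := v)
  rw [adjMatrix_Gn, sub_mulVec, one_mulVec, Pi.sub_apply] at hdeg
  simp only [mulVec, dotProduct, Fintype.sum_prod_type, kroneckerMap_apply, circulant_apply,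
    of_apply, Function.const_apply, mul_one, Fin.sum_univ_two, Finset.sum_add_distrib,
    sum_cycleOffsetsIndicator_sub hn] at hdeg
  omega

theorem lapMatrix_Gn (R : Type*) [CommRing R] (hn : 3 ≤ n) :
    (Gn n).lapMatrix R =
      (6 : R) • 1 - circulant (cycleOffsetsIndicator n) ⊗ₖ
        (of fun _ _ => 1 : Matrix (Fin 2) (Fin 2) R) := by
  have hdeg : (Gn n).degMatrix R = (5 : R) • 1 := by
    ext v w
    simp [SimpleGraph.degMatrix, Gn_isRegularOfDegree hn v, diagonal_apply, one_apply]
  rw [SimpleGraph.lapMatrix, hdeg, adjMatrix_Gn]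
  module

theorem dft_cycleOffsetsIndicator (hn : 3 ≤ n) (k : ZMod n) :
    𝓕 (cycleOffsetsIndicator n) k = 1 + stdAddChar (-k) + stdAddChar k := by
  simp only [dft_apply, cycleOffsetsIndicator, smul_eq_mul, mul_ite, mul_one, mul_zero,
    Finset.sum_ite_mem, Finset.univ_inter]
  rw [sum_cycleOffsets hn]
  simp

theorem dft_cycleOffsetsIndicator_natCast (hn : 3 ≤ n) (i : ℕ) :
    𝓕 (cycleOffsetsIndicator n : ZMod n → ℂ) i = 3 - 4 * (Real.sin (i * Real.pi / n) ^ 2 : ℝ) := by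
  have hpos : stdAddChar (i : ZMod n) = Complex.exp (2 * (i * Real.pi / n) * Complex.I) := by
    have h := stdAddChar_coe (N := n) i
    push_cast at h
    rw [h]
    ring_nf
  have hneg : stdAddChar (-(i : ZMod n)) = Complex.exp (-(2 * (i * Real.pi / n)) * Complex.I) := by
    have h := stdAddChar_coe (N := n) (-i)
    push_cast at h
    rw [h]
    ring_nf
  rw [dft_cycleOffsetsIndicator hn, hpos, hneg, Real.sin_sq_eq_half_sub]
  push_cast
  linear_combination -Complex.two_cos (2 * (i * Real.pi / n))

theorem charpoly_smul_lapMatrix_Gn (hn : 3 ≤ n) :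
    ((1 / 5 : ℂ) • (Gn n).lapMatrix ℂ).charpoly =
      (X - C (6 / 5 : ℂ)) ^ n *
        ∏ i ∈ Finset.range n, (X - C ((8 / 5 * Real.sin (i * Real.pi / n) ^ 2 : ℝ) : ℂ)) := by
  have heigen := smul_sub_mul_eq_mul_diagonal (1 / 5) 6
    (kronecker_mul_kronecker_eq_mul_diagonal
      (circulant_mul_dftMatrix (cycleOffsetsIndicator n)) allOnes_mul_hadamard)
  rw [← lapMatrix_Gn ℂ hn] at heigen
  rw [charpoly_eq_prod_of_mul_eq_mul_diagonal (isUnit_dftMatrix.kronecker isUnit_hadamard) heigen,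
    Fintype.prod_prod_type]
  simp only [Fin.prod_univ_two, prod_univ_eq_prod_range, dft_cycleOffsetsIndicator_natCast hn,
    cons_val_zero, cons_val_one, Finset.prod_mul_distrib, mul_zero, sub_zero,
    Finset.prod_const]
  rw [mul_comm]
  congr 1
  · norm_num
  · refine Finset.prod_congr rfl fun i _ => ?_
    push_cast
    ring_nf

end StrongProduct

/-- For every integer `n ≥ 3`, the graph `G_n = P₂ ⊠ C_n` is 5-regular, its
normalized Laplacian matrix equals `(1/5)·L(G_n)`, and the characteristic polynomial of
`(1/5)·L(G_n)` over `ℝ` factors as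
`(X − 6/5)^n · ∏_{i=0}^{n−1} (X − (8/5)·sin²(iπ/n))`. -/
theorem normalizedLap_Gn (n : ℕ) [NeZero n] (hn : 3 ≤ n) :
    (Gn n).IsRegularOfDegree 5 ∧
    normalizedLapMatrix (Gn n) = (1 / 5 : ℝ) • (Gn n).lapMatrix ℝ ∧
    ((1 / 5 : ℝ) • (Gn n).lapMatrix ℝ).charpoly =
      (X - C (6 / 5 : ℝ)) ^ n *
        ∏ i ∈ Finset.range n, (X - C (8 / 5 * Real.sin (i * Real.pi / n) ^ 2)) := by
  have hreg := Gn_isRegularOfDegree hn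
  refine ⟨hreg, by rw [normalizedLapMatrix_of_isRegularOfDegree _ hreg]; norm_num, ?_⟩
  have hmap : ((1 / 5 : ℝ) • (Gn n).lapMatrix ℝ).map Complex.ofRealHom =
      (1 / 5 : ℂ) • (Gn n).lapMatrix ℂ := by
    rw [← (Gn n).map_lapMatrix Complex.ofRealHom]
    ext
    simp
  apply Polynomial.map_injective Complex.ofRealHom Complex.ofReal_injective
  rw [← charpoly_map, hmap, charpoly_smul_lapMatrix_Gn hn]
  simp only [Polynomial.map_mul, Polynomial.map_pow, Polynomial.map_prod, Polynomial.map_sub,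
    map_X, map_C, Complex.ofRealHom_eq_coe]
  push_cast
  rfl
end

section
/- Let n ≥ 3 and let S be any set of r vertical edges of G_n, where 0 ≤ r ≤ n. Then the Wiener index of the graph G_n^r obtained from G_n by deleting the edges in S satisfies W(G_n^r) = W(G_n) + r. -/
/-- Deleting a set of edges from `G_n` keeps adjacency decidable (classically). -/
noncomputable instance (n : ℕ) (s : Set (Sym2 (ZMod n × Fin 2))) :
    DecidableRel ((Gn n).deleteEdges s).Adj :=
  Classical.decRel _

/-! Deleting a vertical edge `s((i,0), (i,1))` only changes the distance between its two ends,
from 1 to 2 (through `(i+1, 0)`, which needs `1 ≠ 0` in `ZMod n`). All other distances survive: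
between distinct columns, adjacency in `G_n` ignores the rows, so a walk of `G_n` can be followed
column by column using only non-vertical edges. Summed over ordered pairs, each deleted edge adds 2,
i.e. 1 to the Wiener index. -/

open Finset SimpleGraph

theorem sum_sum_ite_mk_mem_eq_two_mul_card {V : Type*} [Fintype V] [DecidableEq V]
    (S : Finset (Sym2 V)) (hS : ∀ e ∈ S, ¬e.IsDiag) :
    ∑ u, ∑ v, (if s(u, v) ∈ S then 1 else 0) = 2 * #S := by
  classical
  let K := fromEdgeSet (S : Set (Sym2 V))
  have hK : K.edgeFinset = S := by
    rw [← coe_inj, coe_edgeFinset, edgeSet_fromEdgeSet, sdiff_eq_left, Set.disjoint_left]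
    exact hS
  calc ∑ u, ∑ v, (if s(u, v) ∈ S then 1 else 0)
      = ∑ u, K.degree u := by
        refine sum_congr rfl fun u _ => ?_
        rw [← card_neighborFinset_eq_degree, neighborFinset_eq_filter, card_filter]
        refine sum_congr rfl fun v _ => if_congr ?_ rfl rfl
        simp only [K, fromEdgeSet_adj, mem_coe, iff_self_and]
        exact fun huv hdiag => hS _ huv (Sym2.mk_isDiag_iff.mpr hdiag)
    _ = 2 * #S := by rw [sum_degrees_eq_twice_card_edges]; convert congrArg (2 * #·) hK

theorem wienerIndex_eq_add_card_of_dist_eq {V : Type*} [Fintype V] [DecidableEq V]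
    {G H : SimpleGraph V} (S : Finset (Sym2 V)) (hS : ∀ e ∈ S, ¬e.IsDiag)
    (hdist : ∀ u v, H.dist u v = G.dist u v + if s(u, v) ∈ S then 1 else 0) :
    wienerIndex H = wienerIndex G + #S := by
  simp only [wienerIndex, hdist, sum_add_distrib, sum_sum_ite_mk_mem_eq_two_mul_card S hS]
  omega

section Gn

variable {n : ℕ}

theorem Gn_adj_iff_of_fst_ne {x y : ZMod n × Fin 2} (h : x.1 ≠ y.1) :
    (Gn n).Adj x y ↔ x.1 = y.1 + 1 ∨ y.1 = x.1 + 1 := by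
  simp [Gn, h, ne_of_apply_ne Prod.fst h]

theorem Gn_adj_of_fst_eq {x y : ZMod n × Fin 2} (h : x.1 = y.1) (hxy : x ≠ y) :
    (Gn n).Adj x y :=
  ⟨hxy, Or.inl h⟩

theorem Gn_adj_add_one (h1 : (1 : ZMod n) ≠ 0) (i : ZMod n) (a b : Fin 2) :
    (Gn n).Adj (i, a) (i + 1, b) := by
  have hi : i ≠ i + 1 := by simpa using h1
  exact (Gn_adj_iff_of_fst_ne hi).2 (Or.inr rfl)

theorem exists_walk_length_le_of_fst_ne {H : SimpleGraph (ZMod n × Fin 2)}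
    (hH : ∀ x y, (Gn n).Adj x y → x.1 ≠ y.1 → H.Adj x y) {x y : ZMod n × Fin 2}
    (w : (Gn n).Walk x y) (hxy : x.1 ≠ y.1) (a b : Fin 2) :
    ∃ p : H.Walk (x.1, a) (y.1, b), p.length ≤ w.length := by
  induction w generalizing a with
  | nil => exact absurd rfl hxy
  | @cons x z y hxz w ih =>
    by_cases hxz1 : x.1 = z.1
    · obtain ⟨p, hp⟩ := ih (hxz1 ▸ hxy) a
      refine ⟨p.copy (by rw [hxz1]) rfl, ?_⟩
      simp only [Walk.length_copy, Walk.length_cons]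
      omega
    have hadj : ∀ c, H.Adj (x.1, a) (z.1, c) := fun c =>
      hH _ _ ((Gn_adj_iff_of_fst_ne (x := (x.1, a)) (y := (z.1, c)) hxz1).2
        ((Gn_adj_iff_of_fst_ne hxz1).1 hxz)) hxz1
    by_cases hzy : z.1 = y.1
    · exact ⟨(Walk.cons (hadj b) Walk.nil).copy rfl (by rw [hzy]), by simp⟩
    · obtain ⟨p, hp⟩ := ih hzy a
      exact ⟨Walk.cons (hadj a) p, by simp only [Walk.length_cons]; omega⟩

theorem dist_eq_Gn_dist_of_fst_ne {H : SimpleGraph (ZMod n × Fin 2)} (hle : H ≤ Gn n)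
    (hH : ∀ x y, (Gn n).Adj x y → x.1 ≠ y.1 → H.Adj x y) {u v : ZMod n × Fin 2}
    (huv : u.1 ≠ v.1) : H.dist u v = (Gn n).dist u v := by
  by_cases hr : (Gn n).Reachable u v
  · obtain ⟨w, hw⟩ := hr.exists_walk_length_eq_dist
    obtain ⟨p, hp⟩ := exists_walk_length_le_of_fst_ne hH w huv u.2 v.2
    exact le_antisymm ((dist_le p).trans (hw ▸ hp)) (p.reachable.dist_anti hle)
  · rw [dist_eq_zero_of_not_reachable hr,
      dist_eq_zero_of_not_reachable fun h => hr (h.mono hle)]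

section deleteEdges

variable {S : Set (Sym2 (ZMod n × Fin 2))}

theorem Gn_deleteEdges_adj_of_fst_ne (hS : ∀ x y, s(x, y) ∈ S → x.1 = y.1)
    {x y : ZMod n × Fin 2} (h : (Gn n).Adj x y) (hxy : x.1 ≠ y.1) :
    ((Gn n).deleteEdges S).Adj x y :=
  deleteEdges_adj.2 ⟨h, fun hm => hxy (hS x y hm)⟩

theorem Gn_deleteEdges_dist_eq_two (h1 : (1 : ZMod n) ≠ 0)
    (hS : ∀ x y, s(x, y) ∈ S → x.1 = y.1) {u v : ZMod n × Fin 2} (huv : u.1 = v.1)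
    (hne : u ≠ v) (hmem : s(u, v) ∈ S) : ((Gn n).deleteEdges S).dist u v = 2 := by
  have hcol : u.1 ≠ u.1 + 1 := by simpa using h1
  have hup : ((Gn n).deleteEdges S).Adj u (u.1 + 1, u.2) :=
    Gn_deleteEdges_adj_of_fst_ne hS (Gn_adj_add_one h1 u.1 u.2 u.2) hcol
  have hdown : ((Gn n).deleteEdges S).Adj (u.1 + 1, u.2) v :=
    huv ▸ (Gn_deleteEdges_adj_of_fst_ne hS (Gn_adj_add_one h1 v.1 v.2 u.2) (huv ▸ hcol)).symm
  let w := Walk.cons hup (Walk.cons hdown Walk.nil)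
  have hpos : 0 < ((Gn n).deleteEdges S).dist u v := w.reachable.pos_dist_of_ne hne
  have hne_one : ((Gn n).deleteEdges S).dist u v ≠ 1 := by
    rw [Ne, dist_eq_one_iff_adj, deleteEdges_adj]
    exact fun h => h.2 hmem
  have hle : ((Gn n).deleteEdges S).dist u v ≤ 2 := dist_le w
  omega

end deleteEdges

def verticalEdge (i : ZMod n) : Sym2 (ZMod n × Fin 2) := s((i, 0), (i, 1))

section vertical

variable {S : Finset (Sym2 (ZMod n × Fin 2))}

theorem fst_eq_of_mk_mem_of_vertical (hS : ∀ e ∈ S, ∃ i, e = verticalEdge i)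
    {x y : ZMod n × Fin 2} (h : s(x, y) ∈ S) : x.1 = y.1 := by
  obtain ⟨i, hi⟩ := hS _ h
  rcases Sym2.eq_iff.1 hi with ⟨rfl, rfl⟩ | ⟨rfl, rfl⟩ <;> rfl

theorem not_isDiag_of_mem_vertical (hS : ∀ e ∈ S, ∃ i, e = verticalEdge i)
    {e : Sym2 (ZMod n × Fin 2)} (he : e ∈ S) : ¬e.IsDiag := by
  obtain ⟨i, rfl⟩ := hS e he
  simp [verticalEdge]

theorem Gn_deleteEdges_dist (h1 : (1 : ZMod n) ≠ 0) (hS : ∀ e ∈ S, ∃ i, e = verticalEdge i)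
    (u v : ZMod n × Fin 2) :
    ((Gn n).deleteEdges ↑S).dist u v = (Gn n).dist u v + if s(u, v) ∈ S then 1 else 0 := by
  have hcol : ∀ x y, s(x, y) ∈ (S : Set (Sym2 (ZMod n × Fin 2))) → x.1 = y.1 :=
    fun _ _ => fst_eq_of_mk_mem_of_vertical hS
  by_cases huv : u.1 = v.1
  · by_cases hmem : s(u, v) ∈ S
    · have hne : u ≠ v := by
        rintro rfl
        exact not_isDiag_of_mem_vertical hS hmem (Sym2.mk_isDiag_iff.2 rfl)
      rw [if_pos hmem, dist_eq_one_iff_adj.2 (Gn_adj_of_fst_eq huv hne),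
        Gn_deleteEdges_dist_eq_two h1 hcol huv hne hmem]
    · rw [if_neg hmem, add_zero]
      obtain rfl | hne := eq_or_ne u v
      · simp
      rw [dist_eq_one_iff_adj.2 (Gn_adj_of_fst_eq huv hne), dist_eq_one_iff_adj,
        deleteEdges_adj]
      exact ⟨Gn_adj_of_fst_eq huv hne, hmem⟩
  · rw [if_neg fun hmem => huv (hcol u v (mem_coe.2 hmem)), add_zero]
    exact dist_eq_Gn_dist_of_fst_ne (deleteEdges_le _)
      (fun _ _ => Gn_deleteEdges_adj_of_fst_ne hcol) huv

end vertical

end Gn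

theorem wienerIndex_Gn_deleteVerticalEdges_general (n r : ℕ) [NeZero n] (hn : 3 ≤ n)
    (S : Finset (Sym2 (ZMod n × Fin 2)))
    (hS : ∀ e ∈ S, ∃ i : ZMod n, e = s(((i, 0) : ZMod n × Fin 2), (i, 1)))
    (hcard : S.card = r) :
    wienerIndex ((Gn n).deleteEdges ↑S) = wienerIndex (Gn n) + r := by
  have h1 : (1 : ZMod n) ≠ 0 := by
    have : Fact (1 < n) := ⟨by omega⟩
    exact one_ne_zero
  rw [← hcard]
  exact wienerIndex_eq_add_card_of_dist_eq S (fun _ => not_isDiag_of_mem_vertical hS)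
    (Gn_deleteEdges_dist h1 hS)

/-- Let `n ≥ 3` and let `S` be any set of `r` vertical edges of
`G_n = P₂ ⊠ C_n` (the vertical edges being the edges joining `(i,0)` and `(i,1)`), where
`0 ≤ r ≤ n`. Then the Wiener index of the graph obtained from `G_n` by deleting the edges
of `S` equals `W(G_n) + r`. -/
theorem wienerIndex_Gn_deleteVerticalEdges (n r : ℕ) [NeZero n] (hn : 3 ≤ n)
    (hr : r ≤ n) (S : Finset (Sym2 (ZMod n × Fin 2)))
    (hS : ∀ e ∈ S, ∃ i : ZMod n, e = s(((i, 0) : ZMod n × Fin 2), (i, 1)))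
    (hcard : S.card = r) :
    wienerIndex ((Gn n).deleteEdges ↑S) = wienerIndex (Gn n) + r :=
  wienerIndex_Gn_deleteVerticalEdges_general n r hn S hS hcard
end
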